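/- Let n ≥ 6 and let i, k be integers with 2 ≤ i ≤ n-4 and i+2 < k < n, and set z = (i-1, k)(k-1, k+1) ∈ S_n. Then z consecutively contains none of the patterns 2143, 14325, 1536247, 1462537. -/
import Mathlib


/-- The longest element `w₀` of the symmetric group on `Fin n`,
sending `t` to `n - 1 - t` (`0`-based), i.e. `t ↦ n + 1 - t` in `1`-based terms. -/
def w0 (n : ℕ) : Equiv.Perm (Fin n) :=
  ⟨Fin.rev, Fin.rev, fun x => Fin.rev_rev x, fun x => Fin.rev_rev x⟩

/-- The Coxeter length of a permutation: its number of inversions. -/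
def len {n : ℕ} (x : Equiv.Perm (Fin n)) : ℕ :=
  (Finset.univ.filter fun ab : Fin n × Fin n => ab.1 < ab.2 ∧ x ab.2 < x ab.1).card

/-- The pattern `p ∈ S_m` consecutively appears in `x ∈ S_n` at (`1`-based) position `i`.
Permutations of `{1, …, N}` are modelled (`0`-based) as permutations of `Fin N`. -/
def consecAppearsAt {m n : ℕ} (p : Equiv.Perm (Fin m)) (x : Equiv.Perm (Fin n)) (i : ℕ) :
    Prop :=
  ∃ h : 1 ≤ i ∧ i + m ≤ n + 1,
    ∀ a b : Fin m,
      p a < p b ↔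
        x ⟨i - 1 + a.val, by have := a.isLt; omega⟩ <
          x ⟨i - 1 + b.val, by have := b.isLt; omega⟩

/-- `x` consecutively contains the pattern `p`. -/
def consecContains {m n : ℕ} (p : Equiv.Perm (Fin m)) (x : Equiv.Perm (Fin n)) : Prop :=
  ∃ i : ℕ, consecAppearsAt p x i

/-- The pattern `2143 ∈ S₄` (`0`-based one-line notation: `1,0,3,2`). -/
def p2143 : Equiv.Perm (Fin 4) := Equiv.swap 0 1 * Equiv.swap 2 3

/-- The pattern `14325 ∈ S₅` (`0`-based one-line notation: `0,3,2,1,4`). -/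
def p14325 : Equiv.Perm (Fin 5) := Equiv.swap 1 3

/-- The pattern `1536247 ∈ S₇` (`0`-based one-line notation: `0,4,2,5,1,3,6`). -/
def p1536247 : Equiv.Perm (Fin 7) := Equiv.swap 1 4 * Equiv.swap 3 5

/-- The pattern `1462537 ∈ S₇` (`0`-based one-line notation: `0,3,5,1,4,2,6`). -/
def p1462537 : Equiv.Perm (Fin 7) := Equiv.swap 1 3 * Equiv.swap 2 5

/-- The pattern `1423 ∈ S₄` (`0`-based one-line notation: `0,3,1,2`). -/
def p1423 : Equiv.Perm (Fin 4) := Equiv.swap 1 2 * Equiv.swap 1 3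

/-- The pattern `2314 ∈ S₄` (`0`-based one-line notation: `1,2,0,3`). -/
def p2314 : Equiv.Perm (Fin 4) := Equiv.swap 0 2 * Equiv.swap 0 1

/-- The simple transposition `s_t = (t, t+1)` (`1`-based) as a permutation of `Fin n`
(junk value `1` if `t` is out of range). -/
def simpleT (n t : ℕ) : Equiv.Perm (Fin n) :=
  if h : 1 ≤ t ∧ t < n then Equiv.swap ⟨t - 1, by omega⟩ ⟨t, h.2⟩ else 1

/-- The product `s_a s_{a-1} ⋯ s_b` of simple transpositions with descending indices
(the identity if `b > a`). -/
def descProd (n a b : ℕ) : Equiv.Perm (Fin n) :=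
  ((List.range (a + 1 - b)).map fun t => simpleT n (a - t)).prod

/-- The product `s_a s_{a+1} ⋯ s_b` of simple transpositions with ascending indices
(the identity if `b < a`). -/
def ascProd (n a b : ℕ) : Equiv.Perm (Fin n) :=
  ((List.range (b + 1 - a)).map fun t => simpleT n (a + t)).prod

/-- `w s_b < w`, i.e. `s_b` is a right descent of `w`: `w(b) > w(b+1)` (`1`-based). -/
def rdes {n : ℕ} (w : Equiv.Perm (Fin n)) (b : ℕ) : Prop :=
  ∃ h : 1 ≤ b ∧ b < n, w ⟨b, h.2⟩ < w ⟨b - 1, by omega⟩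

/-- `w s_b > w`, i.e. `s_b` is a right ascent of `w`: `w(b) < w(b+1)` (`1`-based). -/
def rasc {n : ℕ} (w : Equiv.Perm (Fin n)) (b : ℕ) : Prop :=
  ∃ h : 1 ≤ b ∧ b < n, w ⟨b - 1, by omega⟩ < w ⟨b, h.2⟩

/-- `(W 1, …, W l)` is a strong right Bruhat walk: consecutive entries differ by right
multiplication by a simple transposition. -/
def isWalk {n : ℕ} (l : ℕ) (W : ℕ → Equiv.Perm (Fin n)) : Prop :=
  ∀ t : ℕ, 1 ≤ t → t + 1 ≤ l → ∃ b : ℕ, 1 ≤ b ∧ b < n ∧ W (t + 1) = W t * simpleT n b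

/-- The walk `(W 1, …, W l)` is compatible with the reduced expression
`s_{ι 1} s_{ι 2} ⋯ s_{ι l}`. -/
def compat {n : ℕ} (l : ℕ) (ι : ℕ → ℕ) (W : ℕ → Equiv.Perm (Fin n)) : Prop :=
  ∀ t : ℕ, 1 ≤ t → t ≤ l →
    rdes (W t) (ι t) ∧
    (2 ≤ t → rasc (W t) (ι (t - 1))) ∧
    (t + 1 ≤ l → rasc (W t) (ι (t + 1)))

/-- Membership in `X_{m,n}^i`: the one-line values at positions `i, i+1, …, i+m-1`
(`1`-based) are increasing. -/
def windowIncr {n : ℕ} (m i : ℕ) (x : Equiv.Perm (Fin n)) : Prop :=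
  ∀ a b : Fin n, i - 1 ≤ a.val → a < b → b.val < i - 1 + m → x a < x b

/-- The order-preserving identification of `Fin m` with the window
`{o, o+1, …, o+m-1}` inside `Fin n`. -/
def shiftEquiv (o m n : ℕ) (h : o + m ≤ n) :
    Fin m ≃ {x : Fin n // o ≤ x.val ∧ x.val < o + m} where
  toFun a := ⟨⟨o + a.val, by have := a.isLt; omega⟩, by
    refine ⟨Nat.le_add_right _ _, ?_⟩
    show o + a.val < o + m
    have := a.isLt; omega⟩
  invFun x := ⟨x.val.val - o, by have := x.prop; omega⟩
  left_inv a := by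
    apply Fin.ext
    show o + a.val - o = a.val
    omega
  right_inv x := by
    apply Subtype.ext
    apply Fin.ext
    show o + (x.val.val - o) = x.val.val
    have := x.prop
    omega

/-- The shift `F_{m,n}^i : S_m → S_n`, sending `i+a-1 ↦ i+p(a)-1` (`1`-based) and fixing
all other points. -/
def shiftPerm (m n i : ℕ) (h : i - 1 + m ≤ n) (p : Equiv.Perm (Fin m)) :
    Equiv.Perm (Fin n) :=
  Equiv.Perm.extendDomain p (shiftEquiv (i - 1) m n h)

theorem stmt6 (n i k : ℕ) (hn : 6 ≤ n) (hi : 2 ≤ i) (hi' : i ≤ n - 4)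
    (hik : i + 2 < k) (hk : k < n)
    (z : Equiv.Perm (Fin n))
    (hz : z = Equiv.swap ⟨i - 2, by omega⟩ ⟨k - 1, by omega⟩ *
              Equiv.swap ⟨k - 2, by omega⟩ ⟨k, by omega⟩) :
    ¬ consecContains p2143 z ∧ ¬ consecContains p14325 z ∧
    ¬ consecContains p1536247 z ∧ ¬ consecContains p1462537 z := by
  have hval : ∀ u : Fin n, (z u).val =
      if u.val = i - 2 then k - 1 else if u.val = k - 2 then k
      else if u.val = k - 1 then i - 2 else if u.val = k then k - 2 else u.val := by
    intro u
    rw [hz]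
    simp only [Equiv.Perm.mul_apply, Equiv.swap_apply_def, Fin.ext_iff, apply_ite Fin.val]
    split_ifs <;> omega
  -- a descent of z can only be at position i-2 or k-2
  have key : ∀ u v : Fin n, (u : ℕ) + 1 = (v : ℕ) → z v < z u →
      (u : ℕ) = i - 2 ∨ (u : ℕ) = k - 2 := by
    intro u v huv hlt
    rw [Fin.lt_def, hval, hval] at hlt
    have hu := u.isLt
    split_ifs at hlt <;> omega
  refine ⟨?_, ?_, ?_, ?_⟩
  · rintro ⟨j, ⟨hj1, hj2⟩, hiff⟩
    have hd1 := (hiff ⟨1, by decide⟩ ⟨0, by decide⟩).mp (by decide)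
    have hd2 := (hiff ⟨3, by decide⟩ ⟨2, by decide⟩).mp (by decide)
    have k1 := key _ _ (by simp) hd1
    have k2 := key _ _ (by simp) hd2
    simp only at k1 k2
    omega
  · rintro ⟨j, ⟨hj1, hj2⟩, hiff⟩
    have hd1 := (hiff ⟨2, by decide⟩ ⟨1, by decide⟩).mp (by decide)
    have hd2 := (hiff ⟨3, by decide⟩ ⟨2, by decide⟩).mp (by decide)
    have k1 := key _ _ (by simp) hd1
    have k2 := key _ _ (by simp) hd2
    simp only at k1 k2
    omega
  · rintro ⟨j, ⟨hj1, hj2⟩, hiff⟩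
    have hd1 := (hiff ⟨2, by decide⟩ ⟨1, by decide⟩).mp (by decide)
    have hd2 := (hiff ⟨4, by decide⟩ ⟨3, by decide⟩).mp (by decide)
    have k1 := key _ _ (by simp) hd1
    have k2 := key _ _ (by simp) hd2
    simp only at k1 k2
    omega
  · rintro ⟨j, ⟨hj1, hj2⟩, hiff⟩
    have hd1 := (hiff ⟨3, by decide⟩ ⟨2, by decide⟩).mp (by decide)
    have hd2 := (hiff ⟨5, by decide⟩ ⟨4, by decide⟩).mp (by decide)
    have k1 := key _ _ (by simp) hd1
    have k2 := key _ _ (by simp) hd2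
    simp only at k1 k2
    omega
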